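/- Let V = {1,…,n}, let λ = (λ_1,…,λ_k) be an integer sequence with 1 < λ_1 < ⋯ < λ_k ≤ n satisfying λ_{i+1} − λ_i ≤ λ_1 for all i = 1,…,k−1 and λ_1 + λ_k = n, and let 𝓗 = 𝓗(λ). Then for every position x ∈ ℤ_{≥0}^V and all integers μ, η with 0 ≤ μ < m(x) and m(x) − μ + 1 ≤ η ≤ y_𝓗(x), there exists a move x → x' such that m(x') = μ and y_𝓗(x') = η. -/

import Mathlib

open Finset

/-- An `H`-move in hypergraph NIM: strictly decrease every pile in `H`, keep others. -/
def HMove {n : ℕ} (H : Finset (Fin n)) (x x' : Fin n → ℕ) : Prop :=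
  (∀ i ∈ H, x' i < x i) ∧ ∀ i ∉ H, x' i = x i

/-- A move in `NIM_𝓗`: an `H`-move for some hyperedge `H ∈ 𝓗`. -/
def Move {n : ℕ} (F : Set (Finset (Fin n))) (x x' : Fin n → ℕ) : Prop :=
  ∃ H ∈ F, HMove H x x'

/-- Minimal excludant of a set of naturals. -/
noncomputable def mex (S : Set ℕ) : ℕ := sInf {g : ℕ | g ∉ S}

/-- The Sprague–Grundy function of `NIM_𝓗`, defined by well-founded recursion.
(The guard `∑ x' < ∑ x` is automatic whenever `∅ ∉ 𝓗`.) -/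
noncomputable def grundy {n : ℕ} (F : Set (Finset (Fin n))) (x : Fin n → ℕ) : ℕ :=
  mex {g : ℕ | ∃ x', ∃ _h : Move F x x' ∧ (∑ i, x' i) < ∑ i, x i, grundy F x' = g}
termination_by ∑ i, x i
decreasing_by exact _h.2

/-- `N` consecutive moves are possible from `x`: there are hyperedges `H¹,…,H^N ∈ 𝓗`
whose partial sums of characteristic vectors stay `≤ x`. -/
def TetrisReach {n : ℕ} (F : Set (Finset (Fin n))) (x : Fin n → ℕ) (N : ℕ) : Prop :=
  ∃ f : ℕ → Finset (Fin n), (∀ j < N, f j ∈ F) ∧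
    ∀ j < N, ∀ i, (∑ l ∈ Finset.range (j + 1), if i ∈ f l then 1 else 0) ≤ x i

/-- The Tetris function: the largest `N` with `TetrisReach`. -/
noncomputable def tetris {n : ℕ} (F : Set (Finset (Fin n))) (x : Fin n → ℕ) : ℕ :=
  sSup {N | TetrisReach F x N}

/-- `m(x)`: the minimum pile size. -/
noncomputable def mval {n : ℕ} (x : Fin n → ℕ) : ℕ := sInf (Set.range x)

/-- `y_𝓗(x) = 𝒯_𝓗(x − m(x)e) + 1`. -/
noncomputable def yval {n : ℕ} (F : Set (Finset (Fin n))) (x : Fin n → ℕ) : ℕ :=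
  tetris F (fun i => x i - mval x) + 1

/-- `v_𝓗(x)`. -/
noncomputable def vval {n : ℕ} (F : Set (Finset (Fin n))) (x : Fin n → ℕ) : ℕ :=
  Nat.choose (yval F x) 2 + ((mval x - Nat.choose (yval F x) 2 - 1) % yval F x)

/-- A position is long if `m(x) ≤ C(y_𝓗(x), 2)`. -/
noncomputable def IsLong {n : ℕ} (F : Set (Finset (Fin n))) (x : Fin n → ℕ) : Prop :=
  mval x ≤ Nat.choose (yval F x) 2

/-- The Jenkyns–Mayberry function `𝒰_𝓗`. -/
noncomputable def jmU {n : ℕ} (F : Set (Finset (Fin n))) (x : Fin n → ℕ) : ℕ :=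
  if mval x ≤ Nat.choose (yval F x) 2 then tetris F x else vval F x

/-- `𝓗` is a JM hypergraph if its SG function is given by the JM formula. -/
def IsJM {n : ℕ} (F : Set (Finset (Fin n))) : Prop :=
  ∀ x : Fin n → ℕ, grundy F x = jmU F x

/-- `T` is a transversal of `𝓗` if it meets every hyperedge. -/
def IsTransversal {n : ℕ} (F : Set (Finset (Fin n))) (T : Finset (Fin n)) : Prop :=
  ∀ H ∈ F, (T ∩ H).Nonempty

/-- `𝓗` is transversal-free if no hyperedge is a transversal. -/
def TransversalFree {n : ℕ} (F : Set (Finset (Fin n))) : Prop :=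
  ∀ H ∈ F, ¬ IsTransversal F H

/-- The induced subhypergraph `𝓗_S`. -/
def inducedH {n : ℕ} (F : Set (Finset (Fin n))) (S : Finset (Fin n)) : Set (Finset (Fin n)) :=
  {H | H ∈ F ∧ H ⊆ S}

/-- `𝓗` is minimal transversal-free. -/
def MinTransversalFree {n : ℕ} (F : Set (Finset (Fin n))) : Prop :=
  TransversalFree F ∧
    ∀ S : Finset (Fin n), S ⊂ Finset.univ → (inducedH F S).Nonempty →
      ¬ TransversalFree (inducedH F S)

/-- The symmetric hypergraph `𝓗(λ)` of a spectrum `λ₁ < ⋯ < λ_k` (1-indexed). -/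
def Hlambda {n : ℕ} (k : ℕ) (gl : ℕ → ℕ) : Set (Finset (Fin n)) :=
  {H | ∃ j, 1 ≤ j ∧ j ≤ k ∧ H.card = gl j}

/-!
Write `η = t + 1`. A move to minimum `μ` through a hyperedge `H` and a vertex `p ∈ H` is
`x' = μe + z` with `low ≤ z ≤ high`, where `low` vanishes on `H` and `high` vanishes at `p` and
is `x - (μ + 1)e` on the rest of `H`. Adding one token raises `𝒯` by at most one, so `𝒯` takes
every value between `𝒯(low)` and `𝒯(high)` on this box, and we need `𝒯(low) ≤ t ≤ 𝒯(high)`.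

Take `|H| = λ_k`. Since `λ₁ + λ_k = n`, the only hyperedge avoiding `H` is its complement, so
`𝒯(low)` is at most the pile of any vertex outside `H`. Let `s` be a minimal pile. If some other
pile `j` has `x_j - μ ≤ t`, take `H ∋ s` avoiding `j`: then `𝒯(low) ≤ t`, and
`high ≥ x - m(x)e` gives `𝒯(high) ≥ y(x) - 1 ≥ t`. Otherwise take `H` avoiding `s`: then
`𝒯(low) ≤ m(x) - μ ≤ t`, and since `λ₁ ≥ 2` some hyperedge of size `λ_k` avoids both `s` and
`p`; all its piles in `high` are at least `t`, so it can be played `t` times.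
-/

theorem exists_mem_Icc_eq_of_update_succ_le {ι : Type*} [Fintype ι] [DecidableEq ι]
    (φ : (ι → ℕ) → ℕ) (hφ : ∀ z i, φ (Function.update z i (z i + 1)) ≤ φ z + 1)
    {z₁ z₂ : ι → ℕ} {t : ℕ} (h₁₂ : z₁ ≤ z₂) (h₁ : φ z₁ ≤ t) (h₂ : t ≤ φ z₂) :
    ∃ z ∈ Set.Icc z₁ z₂, φ z = t := by
  obtain ⟨z, hz, hmax⟩ := ((Finset.Icc z₁ z₂).filter (φ · ≤ t)).exists_max_image (∑ i, · i)
    ⟨z₁, mem_filter.2 ⟨mem_Icc.2 ⟨le_rfl, h₁₂⟩, h₁⟩⟩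
  obtain ⟨hz, hzt⟩ := mem_filter.1 hz
  obtain ⟨hz₁, hz₂⟩ := mem_Icc.1 hz
  refine ⟨z, ⟨hz₁, hz₂⟩, le_antisymm hzt (not_lt.1 fun hlt => ?_)⟩
  obtain ⟨i, hi⟩ : ∃ i, z i < z₂ i := by
    by_contra! h
    exact (h₂.trans_lt (le_antisymm hz₂ h ▸ hlt)).false
  set z' := Function.update z i (z i + 1)
  have hz' : z' ∈ (Finset.Icc z₁ z₂).filter (φ · ≤ t) := by
    refine mem_filter.2 ⟨mem_Icc.2 ⟨fun j => ?_, fun j => ?_⟩, (hφ z i).trans (by omega)⟩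
    · rcases eq_or_ne j i with rfl | hj
      · simpa [z'] using (hz₁ j).trans (Nat.le_succ _)
      · simpa [z', hj] using hz₁ j
    · rcases eq_or_ne j i with rfl | hj
      · simpa [z'] using hi
      · simpa [z', hj] using hz₂ j
  have := hmax z' hz'
  rw [sum_update_of_mem (mem_univ i), ← add_sum_erase _ _ (mem_univ i),
    ← sdiff_singleton_eq_erase] at this
  omega

section Tetris

variable {n : ℕ} {F : Set (Finset (Fin n))} {z : Fin n → ℕ} {N : ℕ}

theorem tetrisReach_iff :
    TetrisReach F z N ↔ ∃ f : ℕ → Finset (Fin n), (∀ j < N, f j ∈ F) ∧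
      ∀ i, ∑ l ∈ range N, (if i ∈ f l then 1 else 0) ≤ z i := by
  refine ⟨fun ⟨f, hfF, hf⟩ => ⟨f, hfF, fun i => ?_⟩,
    fun ⟨f, hfF, hf⟩ => ⟨f, hfF, fun j hj i => ?_⟩⟩
  · cases N with
    | zero => simp
    | succ N => exact hf N N.lt_succ_self i
  · exact (sum_le_sum_of_subset (range_subset_range.2 hj)).trans (hf i)

theorem TetrisReach.le_sum (hF : ∀ H ∈ F, H.Nonempty) (h : TetrisReach F z N) :
    N ≤ ∑ i, z i := by
  obtain ⟨f, hfF, hf⟩ := tetrisReach_iff.1 h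
  calc N = ∑ _l ∈ range N, 1 := by simp
    _ ≤ ∑ l ∈ range N, ∑ i, (if i ∈ f l then 1 else 0) := by
        refine sum_le_sum fun l hl => ?_
        simpa [sum_boole, card_pos] using hF _ (hfF l (mem_range.1 hl))
    _ = ∑ i, ∑ l ∈ range N, (if i ∈ f l then 1 else 0) := sum_comm
    _ ≤ ∑ i, z i := sum_le_sum fun i _ => hf i

theorem bddAbove_tetrisReach (hF : ∀ H ∈ F, H.Nonempty) : BddAbove {N | TetrisReach F z N} :=
  ⟨∑ i, z i, fun _ h => h.le_sum hF⟩

theorem tetrisReach_zero : TetrisReach F z 0 :=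
  ⟨fun _ => ∅, by simp, by simp⟩

theorem TetrisReach.le_tetris (hF : ∀ H ∈ F, H.Nonempty) (h : TetrisReach F z N) :
    N ≤ tetris F z :=
  le_csSup (bddAbove_tetrisReach hF) h

theorem tetrisReach_tetris (hF : ∀ H ∈ F, H.Nonempty) : TetrisReach F z (tetris F z) :=
  Nat.sSup_mem ⟨0, tetrisReach_zero⟩ (bddAbove_tetrisReach hF)

theorem tetris_le {B : ℕ} (h : ∀ N, TetrisReach F z N → N ≤ B) : tetris F z ≤ B :=
  csSup_le ⟨0, tetrisReach_zero⟩ h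

theorem tetris_mono (hF : ∀ H ∈ F, H.Nonempty) : Monotone (tetris F) := by
  intro z z' hzz'
  obtain ⟨f, hfF, hf⟩ := tetrisReach_tetris (z := z) hF
  exact TetrisReach.le_tetris hF ⟨f, hfF, fun j hj i => (hf j hj i).trans (hzz' i)⟩

theorem le_tetris_of_mem (hF : ∀ H ∈ F, H.Nonempty) {A : Finset (Fin n)} {t : ℕ}
    (hA : A ∈ F) (hz : ∀ i ∈ A, t ≤ z i) : t ≤ tetris F z := by
  refine TetrisReach.le_tetris hF (tetrisReach_iff.2 ⟨fun _ => A, fun _ _ => hA, fun i => ?_⟩)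
  by_cases hi : i ∈ A
  · simpa [hi] using hz i hi
  · simp [hi]

theorem tetris_le_of_forall_mem {q : Fin n} (hq : ∀ E ∈ F, (∀ i ∈ E, 0 < z i) → q ∈ E) :
    tetris F z ≤ z q := by
  refine tetris_le fun N h => ?_
  obtain ⟨f, hfF, hf⟩ := tetrisReach_iff.1 h
  have hqf : ∀ l < N, q ∈ f l := fun l hl => hq _ (hfF l hl) fun i hi =>
    calc 0 < ∑ l' ∈ range N, (if i ∈ f l' then 1 else 0) :=
          sum_pos' (fun _ _ => by positivity) ⟨l, mem_range.2 hl, by simp [hi]⟩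
      _ ≤ z i := hf i
  calc N = ∑ l ∈ range N, (if q ∈ f l then 1 else 0) := by
        simp [sum_ite_of_true fun l hl => hqf l (mem_range.1 hl)]
    _ ≤ z q := hf q

/-- A longest play from the new position either fits the old one, or some move hits `i`;
swapping that move to the end and dropping it leaves a play fitting the old position. -/
theorem tetris_update_succ_le (hF : ∀ H ∈ F, H.Nonempty) (z : Fin n → ℕ) (i : Fin n) :
    tetris F (Function.update z i (z i + 1)) ≤ tetris F z + 1 := by
  set z' := Function.update z i (z i + 1)
  have hz'z : ∀ i' ≠ i, z' i' = z i' := fun i' h => Function.update_of_ne h _ _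
  obtain ⟨f, hfF, hf⟩ := tetrisReach_iff.1 (tetrisReach_tetris (z := z') hF)
  by_cases hused : ∃ j₀ < tetris F z', i ∈ f j₀
  · obtain ⟨j₀, hj₀, hij₀⟩ := hused
    obtain ⟨N, hN⟩ : ∃ N, tetris F z' = N + 1 := ⟨_, (Nat.succ_pred_eq_of_pos (by omega)).symm⟩
    rw [hN] at hfF hf hj₀
    set g := fun l => f (Equiv.swap j₀ N l)
    have hswap : ∀ l < N + 1, Equiv.swap j₀ N l < N + 1 := fun l hl => by
      simp only [Equiv.swap_apply_def]; split_ifs <;> omega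
    have hsplit : ∀ i', ∑ l ∈ range N, (if i' ∈ g l then 1 else 0) + (if i' ∈ f j₀ then 1 else 0)
        = ∑ l ∈ range (N + 1), (if i' ∈ f l then 1 else 0) := fun i' => by
      rw [← Equiv.Perm.sum_comp (Equiv.swap j₀ N) (range (N + 1)), sum_range_succ]
      · simp [g]
      · intro l hl
        rcases (Equiv.swap_apply_ne_self_iff.mp hl).2 with rfl | rfl <;> simp [hj₀]
    have hreach : TetrisReach F z N :=
      tetrisReach_iff.2 ⟨g, fun j hj => hfF _ (hswap j (by omega)), fun i' => by
        have h₁ := hsplit i'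
        have h₂ := hf i'
        by_cases hi' : i' = i
        · subst hi'
          simp only [z', Function.update_self, hij₀, if_true] at h₁ h₂
          omega
        · rw [hz'z i' hi'] at h₂
          omega⟩
    have := hreach.le_tetris hF
    omega
  · push Not at hused
    have hfit : ∀ i', ∑ l ∈ range (tetris F z'), (if i' ∈ f l then 1 else 0) ≤ z i' := by
      intro i'
      rcases eq_or_ne i' i with rfl | hi'
      · simp [sum_ite_of_false fun l hl => hused l (mem_range.1 hl)]
      · exact (hf i').trans (hz'z i' hi').le
    exact ((tetrisReach_iff.2 ⟨f, hfF, hfit⟩).le_tetris hF).trans (Nat.le_succ _)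

end Tetris

section Move

variable {n : ℕ} {F : Set (Finset (Fin n))}

theorem mval_le (x : Fin n → ℕ) (i : Fin n) : mval x ≤ x i :=
  Nat.sInf_le ⟨i, rfl⟩

theorem exists_eq_mval [Nonempty (Fin n)] (x : Fin n → ℕ) : ∃ i, x i = mval x :=
  Nat.sInf_mem (Set.range_nonempty x)

theorem mval_add_of_eq_zero {μ : ℕ} {z : Fin n → ℕ} {p : Fin n} (hp : z p = 0) :
    mval (fun i => μ + z i) = μ :=
  le_antisymm (by simpa [hp] using mval_le (fun i => μ + z i) p)
    (le_csInf ⟨_, p, rfl⟩ (by rintro _ ⟨i, rfl⟩; simp))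

theorem exists_move_of_tetris_le_of_le (hF : ∀ H ∈ F, H.Nonempty) {x : Fin n → ℕ} {μ t : ℕ}
    (hμ : μ < mval x) {H : Finset (Fin n)} (hH : H ∈ F) {p : Fin n} (hp : p ∈ H)
    (hlow : tetris F (fun i => if i ∈ H then 0 else x i - μ) ≤ t)
    (hhigh : t ≤ tetris F (fun i => if i = p then 0 else if i ∈ H then x i - 1 - μ else x i - μ)) :
    ∃ x', Move F x x' ∧ mval x' = μ ∧ yval F x' = t + 1 := by
  have hμx i : μ < x i := hμ.trans_le (mval_le x i)
  have hlh : (fun i => if i ∈ H then 0 else x i - μ) ≤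
      (fun i => if i = p then 0 else if i ∈ H then x i - 1 - μ else x i - μ) := fun i => by
    rcases eq_or_ne i p with rfl | hip
    · simp [hp]
    · by_cases hiH : i ∈ H <;> simp [hip, hiH]
  obtain ⟨z, ⟨hz₁, hz₂⟩, hzt⟩ :=
    exists_mem_Icc_eq_of_update_succ_le _ (tetris_update_succ_le hF) hlh hlow hhigh
  have hzp : z p = 0 := by simpa using hz₂ p
  have hmove : HMove H x (fun i => μ + z i) := by
    refine ⟨fun i hi => ?_, fun i hi => ?_⟩
    · show μ + z i < x i
      have hzi := hz₂ i
      have := hμx i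
      simp only [hi, if_true] at hzi
      split_ifs at hzi <;> omega
    · show μ + z i = x i
      have h₁ := hz₁ i
      have h₂ := hz₂ i
      have := hμx i
      have hip : i ≠ p := by rintro rfl; exact hi hp
      simp only [hi, hip, if_false] at h₁ h₂
      omega
  refine ⟨_, ⟨H, hH, hmove⟩, mval_add_of_eq_zero hzp, ?_⟩
  simp [yval, mval_add_of_eq_zero hzp, hzt]

end Move

section Hlambda

variable {n k : ℕ} {gl : ℕ → ℕ}

theorem apply_one_le_of_lt_succ (hmono : ∀ i, 1 ≤ i → i < k → gl i < gl (i + 1))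
    {j : ℕ} (hj : 1 ≤ j) (hjk : j ≤ k) : gl 1 ≤ gl j := by
  induction j, hj using Nat.le_induction with
  | base => rfl
  | succ j hj ih => exact (ih (by omega)).trans (hmono j hj (by omega)).le

theorem le_card_of_mem_Hlambda (hmono : ∀ i, 1 ≤ i → i < k → gl i < gl (i + 1))
    {H : Finset (Fin n)} (hH : H ∈ Hlambda k gl) : gl 1 ≤ H.card := by
  obtain ⟨j, hj1, hjk, hcard⟩ := hH
  exact hcard ▸ apply_one_le_of_lt_succ hmono hj1 hjk

theorem nonempty_of_mem_Hlambda (hpos : 0 < gl 1)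
    (hmono : ∀ i, 1 ≤ i → i < k → gl i < gl (i + 1)) {H : Finset (Fin n)}
    (hH : H ∈ Hlambda k gl) : H.Nonempty :=
  card_pos.1 (hpos.trans_le (le_card_of_mem_Hlambda hmono hH))

theorem eq_compl_of_disjoint_of_card_eq (hmono : ∀ i, 1 ≤ i → i < k → gl i < gl (i + 1))
    (hsum : gl 1 + gl k = n) {H E : Finset (Fin n)} (hH : H.card = gl k)
    (hE : E ∈ Hlambda k gl) (hEH : Disjoint E H) : E = Hᶜ := by
  refine eq_of_subset_of_card_le (subset_compl_iff_disjoint_right.2 hEH) ?_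
  rw [card_compl, Fintype.card_fin, hH]
  have := le_card_of_mem_Hlambda hmono hE
  omega

theorem tetris_Hlambda_le_of_eq_zero (hmono : ∀ i, 1 ≤ i → i < k → gl i < gl (i + 1))
    (hsum : gl 1 + gl k = n) {H : Finset (Fin n)} (hH : H.card = gl k) {z : Fin n → ℕ}
    (hz : ∀ i ∈ H, z i = 0) {q : Fin n} (hq : q ∉ H) : tetris (Hlambda k gl) z ≤ z q :=
  tetris_le_of_forall_mem fun E hE hEz => by
    have hEH : Disjoint E H := disjoint_left.2 fun i hiE hiH => (hEz i hiE).ne' (hz i hiH)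
    rw [eq_compl_of_disjoint_of_card_eq hmono hsum hH hE hEH]
    exact mem_compl.2 hq

theorem exists_move_Hlambda_of_sub_le (hk : 1 ≤ k) (hpos : 0 < gl 1)
    (hmono : ∀ i, 1 ≤ i → i < k → gl i < gl (i + 1)) (hsum : gl 1 + gl k = n)
    {x : Fin n → ℕ} {μ t : ℕ} (hμ : μ < mval x)
    (ht : t ≤ tetris (Hlambda k gl) (fun i => x i - mval x))
    {s j : Fin n} (hs : x s = mval x) (hjs : j ≠ s) (hj : x j - μ ≤ t) :
    ∃ x', Move (Hlambda k gl) x x' ∧ mval x' = μ ∧ yval (Hlambda k gl) x' = t + 1 := by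
  have hglk := apply_one_le_of_lt_succ hmono hk le_rfl
  obtain ⟨H, hsH, hHj, hH⟩ := exists_subsuperset_card_eq (s := {s}) (t := univ.erase j)
    (n := gl k) (by simpa using hjs.symm) (by simp; omega) (by simp; omega)
  have hjH : j ∉ H := fun h => by simpa using hHj h
  refine exists_move_of_tetris_le_of_le (fun _ => nonempty_of_mem_Hlambda hpos hmono) hμ
    ⟨k, hk, le_rfl, hH⟩ (singleton_subset_iff.1 hsH) ?_ ?_
  · refine (tetris_Hlambda_le_of_eq_zero hmono hsum hH (fun i hi => by simp [hi]) hjH).trans ?_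
    simpa [hjH] using hj
  · refine ht.trans (tetris_mono (fun _ => nonempty_of_mem_Hlambda hpos hmono) fun i => ?_)
    have := mval_le x i
    rcases eq_or_ne i s with rfl | his
    · simp [hs]
    · by_cases hiH : i ∈ H <;> simp [his, hiH] <;> omega

theorem exists_move_Hlambda_of_lt_sub (hk : 1 ≤ k) (hpos : 1 < gl 1)
    (hmono : ∀ i, 1 ≤ i → i < k → gl i < gl (i + 1)) (hsum : gl 1 + gl k = n)
    {x : Fin n → ℕ} {μ t : ℕ} (hμ : μ < mval x) (ht : mval x - μ ≤ t)
    {s : Fin n} (hs : x s = mval x) (hhigh : ∀ j ≠ s, t < x j - μ) :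
    ∃ x', Move (Hlambda k gl) x x' ∧ mval x' = μ ∧ yval (Hlambda k gl) x' = t + 1 := by
  have hF : ∀ H ∈ Hlambda (n := n) k gl, H.Nonempty :=
    fun _ => nonempty_of_mem_Hlambda (by omega) hmono
  have hglk := apply_one_le_of_lt_succ hmono hk le_rfl
  obtain ⟨H, hHs, hH⟩ := exists_subset_card_eq (s := univ.erase s) (n := gl k) (by simp; omega)
  have hsH : s ∉ H := fun h => by simpa using hHs h
  obtain ⟨p, hp⟩ := hF H ⟨k, hk, le_rfl, hH⟩
  have hps : p ≠ s := by rintro rfl; exact hsH hp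
  obtain ⟨A, hAsp, hA⟩ := exists_subset_card_eq (s := (univ.erase s).erase p) (n := gl k)
    (by rw [card_erase_of_mem (by simpa using hps)]; simp; omega)
  refine exists_move_of_tetris_le_of_le hF hμ ⟨k, hk, le_rfl, hH⟩ hp ?_ ?_
  · refine (tetris_Hlambda_le_of_eq_zero hmono hsum hH (fun i hi => by simp [hi]) hsH).trans ?_
    simpa [hsH, hs] using ht
  · refine le_tetris_of_mem hF ⟨k, hk, le_rfl, hA⟩ fun i hi => ?_
    obtain ⟨hip, his⟩ : i ≠ p ∧ i ≠ s := by simpa using hAsp hi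
    have := hhigh i his
    by_cases hiH : i ∈ H <;> simp [hip, hiH] <;> omega

end Hlambda

theorem Hlambda_condition_C3_general
    (n k : ℕ) (gl : ℕ → ℕ) (hk : 1 ≤ k) (hpos : 1 < gl 1)
    (hmono : ∀ i, 1 ≤ i → i < k → gl i < gl (i + 1))
    (hsum : gl 1 + gl k = n)
    (x : Fin n → ℕ) (μ η : ℕ) (hμ : μ < mval x)
    (hη1 : mval x - μ + 1 ≤ η) (hη2 : η ≤ yval (Hlambda (n := n) k gl) x) :
    ∃ x', Move (Hlambda (n := n) k gl) x x' ∧ mval x' = μ ∧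
      yval (Hlambda (n := n) k gl) x' = η := by
  have : Nonempty (Fin n) := ⟨⟨0, by omega⟩⟩
  obtain ⟨s, hs⟩ := exists_eq_mval x
  obtain ⟨t, rfl⟩ : ∃ t, η = t + 1 := ⟨η - 1, by omega⟩
  rw [yval, Nat.add_le_add_iff_right] at hη2
  by_cases hlow : ∃ j ≠ s, x j - μ ≤ t
  · obtain ⟨j, hjs, hj⟩ := hlow
    exact exists_move_Hlambda_of_sub_le hk (by omega) hmono hsum hμ hη2 hs hjs hj
  · push Not at hlow
    exact exists_move_Hlambda_of_lt_sub hk hpos hmono hsum hμ (by omega) hs hlow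

/-- Lemma (C3 for minimal transversal-free symmetric hypergraphs with `λ₁ > 1`). -/
theorem Hlambda_condition_C3
    (n k : ℕ) (gl : ℕ → ℕ) (hk : 1 ≤ k) (hpos : 1 < gl 1)
    (hmono : ∀ i, 1 ≤ i → i < k → gl i < gl (i + 1)) (hle : gl k ≤ n)
    (hgap : ∀ i, 1 ≤ i → i < k → gl (i + 1) - gl i ≤ gl 1)
    (hsum : gl 1 + gl k = n)
    (x : Fin n → ℕ) (μ η : ℕ) (hμ : μ < mval x)
    (hη1 : mval x - μ + 1 ≤ η) (hη2 : η ≤ yval (Hlambda (n := n) k gl) x) :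
    ∃ x', Move (Hlambda (n := n) k gl) x x' ∧ mval x' = μ ∧
      yval (Hlambda (n := n) k gl) x' = η :=
  Hlambda_condition_C3_general n k gl hk hpos hmono hsum x μ η hμ hη1 hη2
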